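/- arXiv:2602.19342 — 6 statements merged into one kernel-verified Lean document; each statement's English description precedes it below -/
import Mathlib

section
/- Let A be a ring, σ: A → M_n(A) a ring homomorphism, and δ = (δ_1,…,δ_n) a sequence of additive maps A → A. The multiplication on S = A[t_1,…,t_n; σ, δ] defined by the commutation rules t_i a = Σ_j σ(a)_{ij} t_j + δ_i(a) is associative if and only if for all a, b ∈ A and all i, δ_i(ab) = Σ_j σ(a)_{ij} δ_j(b) + δ_i(a) b. -/
/-!
The σ-derivation identity is exactly what makes the left action of each `t i` compatible with
scalars: `t i (b • f) = ∑ j σ(b)_{ij} • t j f + δ i b • f`. From this, left multiplication by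
`t i` commutes with right multiplication, `(t i g) h = t i (g h)`; induction along words extends
this to all monomials, and linearity in the left factor gives associativity. Conversely, the
constant coefficients of `(t i · a) · b` and `t i · (a · b)` are the two sides of the identity.
-/

namespace Stmt0

variable {A : Type*} [Ring A] {n : ℕ}

/-- Left action of the variable `t i` on a polynomial (an element of the free
left `A`-module on the free monoid on the variables), following the commutation
rule `t i * (x • w) = (∑ j, σ x i j • (t j * w)) + δ i x • w`. -/
noncomputable def tiMul (σ : A →+* Matrix (Fin n) (Fin n) A) (δ : Fin n → A →+ A)
    (i : Fin n) (f : FreeMonoid (Fin n) →₀ A) : FreeMonoid (Fin n) →₀ A :=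
  f.sum fun w x =>
    (∑ j, Finsupp.single (FreeMonoid.of j * w) (σ x i j)) + Finsupp.single w (δ i x)

/-- Left multiplication by the monomial `w = t_{i₁} ⋯ t_{i_l}`. -/
noncomputable def wordMul (σ : A →+* Matrix (Fin n) (Fin n) A) (δ : Fin n → A →+ A)
    (w : FreeMonoid (Fin n)) (f : FreeMonoid (Fin n) →₀ A) : FreeMonoid (Fin n) →₀ A :=
  (FreeMonoid.toList w).foldr (fun i g => tiMul σ δ i g) f

/-- The multiplication of `S = A[t₁,…,t_n; σ, δ]` determined by the commutation rules
`t_i a = ∑ j σ(a)_{ij} t_j + δ_i(a)`. -/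
noncomputable def oreMul (σ : A →+* Matrix (Fin n) (Fin n) A) (δ : Fin n → A →+ A)
    (f g : FreeMonoid (Fin n) →₀ A) : FreeMonoid (Fin n) →₀ A :=
  f.sum fun w x => (wordMul σ δ w g).mapRange (fun y => x * y) (mul_zero x)

section

variable (σ : A →+* Matrix (Fin n) (Fin n) A) (δ : Fin n → A →+ A)

def IsSigmaDerivation : Prop :=
  ∀ (a b : A) (i : Fin n), δ i (a * b) = (∑ j, σ a i j * δ j b) + δ i a * b

lemma tiMul_single (i : Fin n) (w : FreeMonoid (Fin n)) (x : A) :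
    tiMul σ δ i (Finsupp.single w x) =
      (∑ j, Finsupp.single (FreeMonoid.of j * w) (σ x i j)) + Finsupp.single w (δ i x) := by
  unfold tiMul
  rw [Finsupp.sum_single_index]
  simp

lemma tiMul_add (i : Fin n) (f g : FreeMonoid (Fin n) →₀ A) :
    tiMul σ δ i (f + g) = tiMul σ δ i f + tiMul σ δ i g := by
  unfold tiMul
  rw [Finsupp.sum_add_index']
  · intro w
    simp
  · intro w x y
    simp only [map_add, Matrix.add_apply, Finsupp.single_add, Finset.sum_add_distrib]
    abel

lemma wordMul_one (f : FreeMonoid (Fin n) →₀ A) : wordMul σ δ 1 f = f := rfl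

lemma wordMul_of (i : Fin n) (f : FreeMonoid (Fin n) →₀ A) :
    wordMul σ δ (FreeMonoid.of i) f = tiMul σ δ i f := rfl

lemma wordMul_of_mul (i : Fin n) (w : FreeMonoid (Fin n)) (f : FreeMonoid (Fin n) →₀ A) :
    wordMul σ δ (FreeMonoid.of i * w) f = tiMul σ δ i (wordMul σ δ w f) := rfl

lemma oreMul_eq_sum_smul (f g : FreeMonoid (Fin n) →₀ A) :
    oreMul σ δ f g = f.sum fun w x => x • wordMul σ δ w g := rfl

lemma oreMul_single_left (w : FreeMonoid (Fin n)) (a : A) (h : FreeMonoid (Fin n) →₀ A) :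
    oreMul σ δ (Finsupp.single w a) h = a • wordMul σ δ w h := by
  rw [oreMul_eq_sum_smul, Finsupp.sum_single_index (zero_smul A (wordMul σ δ w h))]

lemma oreMul_add_left (f f' h : FreeMonoid (Fin n) →₀ A) :
    oreMul σ δ (f + f') h = oreMul σ δ f h + oreMul σ δ f' h := by
  simp only [oreMul_eq_sum_smul]
  exact Finsupp.sum_add_index' (fun _ => zero_smul A _) fun _ _ _ => add_smul _ _ _

lemma oreMul_sum_left {ι : Type*} (s : Finset ι) (F : ι → FreeMonoid (Fin n) →₀ A)
    (h : FreeMonoid (Fin n) →₀ A) :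
    oreMul σ δ (∑ j ∈ s, F j) h = ∑ j ∈ s, oreMul σ δ (F j) h := by
  simp only [oreMul_eq_sum_smul]
  exact (Finsupp.sum_finsetSum_index (h := fun w x => x • wordMul σ δ w h)
    (fun _ => zero_smul A _) fun _ _ _ => add_smul _ _ _).symm

lemma oreMul_smul_left (a : A) (f h : FreeMonoid (Fin n) →₀ A) :
    oreMul σ δ (a • f) h = a • oreMul σ δ f h := by
  simp only [oreMul_eq_sum_smul]
  rw [Finsupp.sum_smul_index fun _ => zero_smul A (wordMul σ δ _ h), Finsupp.smul_sum]
  simp only [mul_smul]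

variable {σ δ}

lemma IsSigmaDerivation.tiMul_smul (hδ : IsSigmaDerivation σ δ) (i : Fin n) (b : A)
    (f : FreeMonoid (Fin n) →₀ A) :
    tiMul σ δ i (b • f) = (∑ j, σ b i j • tiMul σ δ j f) + δ i b • f := by
  induction f using Finsupp.induction_linear with
  | zero => simp [tiMul]
  | add f g hf hg =>
    simp only [smul_add, tiMul_add, hf, hg, Finset.sum_add_distrib]
    abel
  | single u c =>
    simp only [Finsupp.smul_single, smul_eq_mul, tiMul_single, smul_add, Finset.smul_sum,
      map_mul σ, hδ b c i, Matrix.mul_apply, Finsupp.single_add, Finset.sum_add_distrib]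
    rw [Finset.sum_comm]
    simp only [← Finsupp.single_finsetSum]
    abel

lemma IsSigmaDerivation.oreMul_tiMul (hδ : IsSigmaDerivation σ δ) (i : Fin n)
    (g h : FreeMonoid (Fin n) →₀ A) :
    oreMul σ δ (tiMul σ δ i g) h = tiMul σ δ i (oreMul σ δ g h) := by
  induction g using Finsupp.induction_linear with
  | zero => simp [tiMul, oreMul]
  | add f g hf hg => rw [tiMul_add, oreMul_add_left, hf, hg, oreMul_add_left, tiMul_add]
  | single v b =>
    rw [tiMul_single, oreMul_add_left, oreMul_sum_left]
    simp only [oreMul_single_left, wordMul_of_mul, hδ.tiMul_smul]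

lemma IsSigmaDerivation.oreMul_wordMul (hδ : IsSigmaDerivation σ δ) (w : FreeMonoid (Fin n))
    (g h : FreeMonoid (Fin n) →₀ A) :
    oreMul σ δ (wordMul σ δ w g) h = wordMul σ δ w (oreMul σ δ g h) := by
  induction w using FreeMonoid.recOn with
  | one => rfl
  | of_mul i w ih => rw [wordMul_of_mul, hδ.oreMul_tiMul, ih, wordMul_of_mul]

lemma IsSigmaDerivation.oreMul_assoc (hδ : IsSigmaDerivation σ δ)
    (f g h : FreeMonoid (Fin n) →₀ A) :
    oreMul σ δ (oreMul σ δ f g) h = oreMul σ δ f (oreMul σ δ g h) := by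
  induction f using Finsupp.induction_linear with
  | zero => simp [oreMul]
  | add f f' hf hf' => rw [oreMul_add_left, oreMul_add_left, hf, hf', oreMul_add_left]
  | single w a => rw [oreMul_single_left, oreMul_smul_left, hδ.oreMul_wordMul, oreMul_single_left]

lemma isSigmaDerivation_of_oreMul_assoc
    (H : ∀ f g h : FreeMonoid (Fin n) →₀ A,
      oreMul σ δ (oreMul σ δ f g) h = oreMul σ δ f (oreMul σ δ g h)) :
    IsSigmaDerivation σ δ := by
  intro a b i
  have hassoc := H (Finsupp.single (FreeMonoid.of i) 1) (Finsupp.single 1 a) (Finsupp.single 1 b)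
  simp only [oreMul_single_left, one_smul, wordMul_of, wordMul_one, tiMul_single, mul_one,
    Finsupp.smul_single, smul_eq_mul, oreMul_add_left, oreMul_sum_left, smul_add,
    Finset.smul_sum] at hassoc
  have hconst := DFunLike.congr_fun hassoc 1
  simp only [Finsupp.add_apply, Finsupp.finsetSum_apply,
    Finsupp.single_eq_of_ne' (FreeMonoid.of_ne_one _), Finset.sum_const_zero, zero_add,
    Finsupp.single_eq_same] at hconst
  exact hconst.symm

end

/-- The multiplication defined by the commutation rules is associative if and only if
`δ_i (a b) = ∑ j σ(a)_{ij} δ_j(b) + δ_i(a) b` for all `a b` and `i`. -/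
theorem oreMul_assoc_iff (σ : A →+* Matrix (Fin n) (Fin n) A) (δ : Fin n → A →+ A) :
    (∀ f g h : FreeMonoid (Fin n) →₀ A,
        oreMul σ δ (oreMul σ δ f g) h = oreMul σ δ f (oreMul σ δ g h)) ↔
    (∀ (a b : A) (i : Fin n), δ i (a * b) = (∑ j, σ a i j * δ j b) + δ i a * b) :=
  ⟨isSigmaDerivation_of_oreMul_assoc, IsSigmaDerivation.oreMul_assoc⟩

end Stmt0
end

section
/- Let A be a ring, σ: A → M_n(A) a ring homomorphism with associated σ-derivation δ: A → A^n, and let V be a left A-module. Given a sequence T = (T_1,…,T_n) of additive endomorphisms of V satisfying T_i(a·v) = Σ_j σ(a)_{ij} T_j(v) + δ_i(a)·v for all a ∈ A, v ∈ V (a (σ,δ)-pseudo-multilinear transformation), the assignment t_i · v = T_i(v) extends the A-module structure on V to a left module structure over S = A[t_1,…,t_n; σ, δ]. Conversely, every left S-module structure on V restricting to the given A-module structure arises this way, and the two constructions are mutually inverse. -/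
structure OreExtension (A : Type*) [Ring A] (n : ℕ)
    (σ : A →+* Matrix (Fin n) (Fin n) A) (δ : Fin n → A →+ A) : Type _ where
  S : Type*
  [ringS : Ring S]
  ι : A →+* S
  t : Fin n → S
  commute_rule : ∀ (i : Fin n) (a : A),
    t i * ι a = (∑ j, ι (σ a i j) * t j) + ι (δ i a)
  unique_repr : ∀ s : S, ∃! c : FreeMonoid (Fin n) →₀ A,
    s = c.sum fun w x => ι x * (List.map t (FreeMonoid.toList w)).prod

attribute [instance] OreExtension.ringS

/-!
The monomials `t_w` (`w` a word in the `t_i`) form a basis of `S` as a left `A`-module, so an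
additive map out of `S` can be prescribed freely on the elements `a * t_w`. Given a ring `R`, a
ring map `φ : A → R` and elements `T_i ∈ R` satisfying the commutation rule of `S`, the assignment
`a * t_w ↦ φ a * T_w` is therefore a well-defined additive map; it is multiplicative because, by
induction on the length of a word, it suffices to check left multiplication by a single `t_i`,
and there the commutation rule of `S` is matched by the one assumed for `T`. This is the
universal property of `S`. For `R = End(V, +)` and `φ` the `A`-action, the commutation rule is
precisely the pseudo-multilinearity of `T`, and ring maps `S → End(V, +)` extending `φ` are the
`S`-module structures on `V` extending the `A`-module structure.
-/

namespace OreExtension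

variable {A : Type*} [Ring A] {n : ℕ} {σ : A →+* Matrix (Fin n) (Fin n) A} {δ : Fin n → A →+ A}
  (e : OreExtension A n σ δ)

noncomputable def sumMonomials : (FreeMonoid (Fin n) →₀ A) →+ e.S :=
  Finsupp.liftAddHom fun w => (AddMonoidHom.mulRight (FreeMonoid.lift e.t w)).comp e.ι

theorem sumMonomials_single (w : FreeMonoid (Fin n)) (a : A) :
    e.sumMonomials (Finsupp.single w a) = e.ι a * FreeMonoid.lift e.t w := by
  simp [sumMonomials]

theorem sumMonomials_bijective : Function.Bijective e.sumMonomials := by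
  have sum_eq (c : FreeMonoid (Fin n) →₀ A) :
      e.sumMonomials c = c.sum fun w x => e.ι x * (List.map e.t (FreeMonoid.toList w)).prod := by
    simp only [sumMonomials, Finsupp.liftAddHom_apply, AddMonoidHom.coe_comp,
      AddMonoidHom.coe_mulRight, AddMonoidHom.coe_coe, FreeMonoid.lift_apply]
    rfl
  refine ⟨fun c c' h => ?_, fun s => ?_⟩
  · obtain ⟨c₀, -, hu⟩ := e.unique_repr (e.sumMonomials c)
    exact (hu c (sum_eq c)).trans (hu c' (h.trans (sum_eq c'))).symm
  · obtain ⟨c, hc, -⟩ := e.unique_repr s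
    exact ⟨c, (sum_eq c).trans hc.symm⟩

noncomputable def coeffEquiv : (FreeMonoid (Fin n) →₀ A) ≃+ e.S :=
  AddEquiv.ofBijective e.sumMonomials e.sumMonomials_bijective

theorem addHom_ext {M : Type*} [AddMonoid M] {f g : e.S →+ M}
    (h : ∀ a w, f (e.ι a * FreeMonoid.lift e.t w) = g (e.ι a * FreeMonoid.lift e.t w)) :
    f = g := by
  have on_coeffs : f.comp e.sumMonomials = g.comp e.sumMonomials :=
    Finsupp.addHom_ext fun w a => by simpa [sumMonomials_single] using h a w
  ext s
  obtain ⟨c, rfl⟩ := e.sumMonomials_bijective.2 s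
  exact DFunLike.congr_fun on_coeffs c

theorem t_mul_monomial (i : Fin n) (a : A) (w : FreeMonoid (Fin n)) :
    e.t i * (e.ι a * FreeMonoid.lift e.t w) =
      (∑ j, e.ι (σ a i j) * FreeMonoid.lift e.t (FreeMonoid.of j * w)) +
        e.ι (δ i a) * FreeMonoid.lift e.t w := by
  simp only [← mul_assoc, e.commute_rule, add_mul, Finset.sum_mul, map_mul,
    FreeMonoid.lift_eval_of]

theorem ringHom_ext {R : Type*} [Semiring R] {f g : e.S →+* R} (hι : f.comp e.ι = g.comp e.ι)
    (ht : ∀ i, f (e.t i) = g (e.t i)) : f = g := by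
  refine RingHom.coe_addMonoidHom_injective (e.addHom_ext fun a w => ?_)
  have hmon : f.toMonoidHom.comp (FreeMonoid.lift e.t) = g.toMonoidHom.comp (FreeMonoid.lift e.t) :=
    FreeMonoid.hom_eq ht
  change f (e.ι a * _) = g (e.ι a * _)
  rw [map_mul, map_mul]
  exact congr_arg₂ (· * ·) (RingHom.congr_fun hι a) (DFunLike.congr_fun hmon w)

variable {R : Type*} [Semiring R]

def OreCompatible (σ : A →+* Matrix (Fin n) (Fin n) A) (δ : Fin n → A →+ A) (φ : A →+* R)
    (T : Fin n → R) : Prop :=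
  ∀ i a, T i * φ a = (∑ j, φ (σ a i j) * T j) + φ (δ i a)

theorem oreCompatible_ringHom (f : e.S →+* R) : OreCompatible σ δ (f.comp e.ι) (f ∘ e.t) :=
  fun i a => by simpa using congr_arg f (e.commute_rule i a)

noncomputable def liftAux (φ : A →+* R) (T : Fin n → R) : e.S →+ R :=
  (Finsupp.liftAddHom fun w => (AddMonoidHom.mulRight (FreeMonoid.lift T w)).comp φ).comp
    e.coeffEquiv.symm.toAddMonoidHom

variable (φ : A →+* R) (T : Fin n → R)

theorem liftAux_monomial (a : A) (w : FreeMonoid (Fin n)) :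
    e.liftAux φ T (e.ι a * FreeMonoid.lift e.t w) = φ a * FreeMonoid.lift T w := by
  have coeffs : e.coeffEquiv (Finsupp.single w a) = e.ι a * FreeMonoid.lift e.t w :=
    e.sumMonomials_single w a
  rw [liftAux, AddMonoidHom.comp_apply, AddEquiv.coe_toAddMonoidHom, ← coeffs,
    AddEquiv.symm_apply_apply]
  simp

theorem liftAux_ι_mul (a : A) (s : e.S) : e.liftAux φ T (e.ι a * s) = φ a * e.liftAux φ T s := by
  have hom_eq := e.addHom_ext (f := (e.liftAux φ T).comp (AddMonoidHom.mulLeft (e.ι a)))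
    (g := (AddMonoidHom.mulLeft (φ a)).comp (e.liftAux φ T)) fun b w => by
      simp only [AddMonoidHom.comp_apply, AddMonoidHom.coe_mulLeft, ← mul_assoc, ← map_mul,
        liftAux_monomial]
  exact DFunLike.congr_fun hom_eq s

variable {φ T}

theorem liftAux_t_mul (hT : OreCompatible σ δ φ T) (i : Fin n) (s : e.S) :
    e.liftAux φ T (e.t i * s) = T i * e.liftAux φ T s := by
  have hom_eq := e.addHom_ext (f := (e.liftAux φ T).comp (AddMonoidHom.mulLeft (e.t i)))
    (g := (AddMonoidHom.mulLeft (T i)).comp (e.liftAux φ T)) fun b w => by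
      simp only [AddMonoidHom.comp_apply, AddMonoidHom.coe_mulLeft, t_mul_monomial, map_add,
        map_sum, liftAux_monomial]
      rw [← mul_assoc, hT i b, add_mul, Finset.sum_mul]
      simp only [map_mul, FreeMonoid.lift_eval_of, mul_assoc]
  exact DFunLike.congr_fun hom_eq s

theorem liftAux_monomial_mul (hT : OreCompatible σ δ φ T) (w : FreeMonoid (Fin n)) (s : e.S) :
    e.liftAux φ T (FreeMonoid.lift e.t w * s) = FreeMonoid.lift T w * e.liftAux φ T s := by
  induction w using FreeMonoid.inductionOn' with
  | one => simp
  | of_mul i w ih => simp only [map_mul, FreeMonoid.lift_eval_of, mul_assoc, e.liftAux_t_mul hT, ih]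

theorem liftAux_mul (hT : OreCompatible σ δ φ T) (s s' : e.S) :
    e.liftAux φ T (s * s') = e.liftAux φ T s * e.liftAux φ T s' := by
  have hom_eq := e.addHom_ext (f := (e.liftAux φ T).comp (AddMonoidHom.mulRight s'))
    (g := (AddMonoidHom.mulRight (e.liftAux φ T s')).comp (e.liftAux φ T)) fun b w => by
      simp only [AddMonoidHom.comp_apply, AddMonoidHom.coe_mulRight]
      rw [mul_assoc, liftAux_ι_mul, e.liftAux_monomial_mul hT, liftAux_monomial, mul_assoc]
  exact DFunLike.congr_fun hom_eq s

theorem liftAux_ι (a : A) : e.liftAux φ T (e.ι a) = φ a := by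
  simpa using e.liftAux_monomial φ T a 1

noncomputable def lift (hT : OreCompatible σ δ φ T) : e.S →+* R where
  __ := e.liftAux φ T
  map_one' := by simpa using e.liftAux_ι (φ := φ) (T := T) 1
  map_mul' := e.liftAux_mul hT

@[simp]
theorem lift_ι (hT : OreCompatible σ δ φ T) (a : A) : e.lift hT (e.ι a) = φ a :=
  e.liftAux_ι a

@[simp]
theorem lift_t (hT : OreCompatible σ δ φ T) (i : Fin n) : e.lift hT (e.t i) = T i := by
  change e.liftAux φ T (e.t i) = T i
  simpa using e.liftAux_monomial φ T 1 (FreeMonoid.of i)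

variable (φ) in
noncomputable def liftEquiv :
    {T : Fin n → R // OreCompatible σ δ φ T} ≃ {f : e.S →+* R // f.comp e.ι = φ} where
  toFun T := ⟨e.lift T.2, RingHom.ext (e.lift_ι T.2)⟩
  invFun f := ⟨f.1 ∘ e.t, by obtain ⟨f, rfl⟩ := f; exact e.oreCompatible_ringHom f⟩
  left_inv T := Subtype.ext (funext (e.lift_t T.2))
  right_inv := by
    rintro ⟨f, rfl⟩
    refine Subtype.ext (e.ringHom_ext (RingHom.ext fun a => ?_) fun i => ?_) <;> simp

theorem oreCompatible_toAddMonoidEnd_iff {V : Type*} [AddCommGroup V] [Module A V]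
    (T : Fin n → AddMonoid.End V) :
    OreCompatible σ δ (Module.toAddMonoidEnd A V) T ↔
      ∀ i a v, T i (a • v) = (∑ j, σ a i j • T j v) + δ i a • v := by
  refine forall₂_congr fun i a => DFunLike.ext_iff.trans (forall_congr' fun v => ?_)
  have sum_apply : (∑ j, Module.toAddMonoidEnd A V (σ a i j) * T j) v = ∑ j, σ a i j • T j v :=
    AddMonoidHom.finsetSum_apply _ _ _
  change T i (a • v) = (∑ j, Module.toAddMonoidEnd A V (σ a i j) * T j) v + δ i a • v ↔ _
  rw [sum_apply]

end OreExtension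

theorem pmt_equiv_modules_general {A : Type*} [Ring A] {n : ℕ}
    (σ : A →+* Matrix (Fin n) (Fin n) A) (δ : Fin n → A →+ A)
    (e : OreExtension A n σ δ)
    (V : Type*) [AddCommGroup V] [Module A V] :
    ∃ E : {T : Fin n → AddMonoid.End V //
            ∀ (i : Fin n) (a : A) (v : V),
              T i (a • v) = (∑ j, σ a i j • T j v) + δ i a • v} ≃
          {ρ : e.S →+* AddMonoid.End V // ∀ (a : A) (v : V), ρ (e.ι a) v = a • v},
      ∀ T (i : Fin n), ((E T : {ρ : e.S →+* AddMonoid.End V //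
            ∀ (a : A) (v : V), ρ (e.ι a) v = a • v}) : e.S →+* AddMonoid.End V) (e.t i)
          = T.1 i := by
  have extends_smul_iff (ρ : e.S →+* AddMonoid.End V) :
      ρ.comp e.ι = Module.toAddMonoidEnd A V ↔ ∀ a v, ρ (e.ι a) v = a • v :=
    RingHom.ext_iff.trans (forall_congr' fun _ => DFunLike.ext_iff)
  let pmtEquiv := Equiv.subtypeEquivRight (OreExtension.oreCompatible_toAddMonoidEnd_iff
    (σ := σ) (δ := δ) (V := V))
  refine ⟨pmtEquiv.symm.trans ((e.liftEquiv _).trans (Equiv.subtypeEquivRight extends_smul_iff)),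
    fun T i => ?_⟩
  exact e.lift_t (pmtEquiv.symm T).2 i

/-- A `(σ,δ)`-pseudo-multilinear transformation on `V` is a family of additive
endomorphisms `T i` with `T i (a • v) = ∑ j, σ a i j • T j v + δ i a • v`.
PMT's on `V` correspond bijectively to left `S`-module structures on `V`
(ring homomorphisms `ρ : S → End(V,+)`) extending the given `A`-module structure,
with the correspondence determined by `ρ (t i) = T i`. -/
theorem pmt_equiv_modules {A : Type*} [Ring A] {n : ℕ}
    (σ : A →+* Matrix (Fin n) (Fin n) A) (δ : Fin n → A →+ A)
    (hδ : ∀ (i : Fin n) (a b : A), δ i (a * b) = (∑ j, σ a i j * δ j b) + δ i a * b)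
    (e : OreExtension A n σ δ)
    (V : Type*) [AddCommGroup V] [Module A V] :
    ∃ E : {T : Fin n → AddMonoid.End V //
            ∀ (i : Fin n) (a : A) (v : V),
              T i (a • v) = (∑ j, σ a i j • T j v) + δ i a • v} ≃
          {ρ : e.S →+* AddMonoid.End V // ∀ (a : A) (v : V), ρ (e.ι a) v = a • v},
      ∀ T (i : Fin n), ((E T : {ρ : e.S →+* AddMonoid.End V //
            ∀ (a : A) (v : V), ρ (e.ι a) v = a • v}) : e.S →+* AddMonoid.End V) (e.t i)
          = T.1 i :=
  pmt_equiv_modules_general σ δ e V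
end

section
/- Let K be a division ring with n > 1, σ: K → M_n(K) a ring homomorphism with σ(a) invertible for all a ≠ 0, and δ a σ-derivation. Then the center of S = K[t_1,…,t_n; σ, δ] equals {a ∈ Z(K) : σ(a) = a·I_n and δ_i(a) = 0 for all i}. -/
theorem Matrix.not_isUnit_of_row_eq_zero {m R : Type*} [Fintype m] [DecidableEq m] [Semiring R]
    [Nontrivial R] {M : Matrix m m R} (i : m) (h : ∀ j, M i j = 0) : ¬IsUnit M := by
  intro hM
  obtain ⟨N, hN⟩ := hM.exists_right_inv
  simpa [Matrix.mul_apply, h] using congrFun (congrFun hN i) i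

namespace FreeMonoid

variable {α : Type*}

theorem of_mul_eq_of_mul_iff {a b : α} {u v : FreeMonoid α} :
    of a * u = of b * v ↔ a = b ∧ u = v := List.cons_eq_cons

theorem mul_of_eq_mul_of_iff {a b : α} {u v : FreeMonoid α} :
    u * of a = v * of b ↔ u = v ∧ a = b := by
  refine ⟨fun h => ?_, fun ⟨hu, hab⟩ => hu ▸ hab ▸ rfl⟩
  obtain ⟨hu, hab⟩ := List.append_inj' (congrArg toList h) rfl
  exact ⟨hu, List.singleton_injective hab⟩

theorem eq_one_or_exists_eq_mul_of (w : FreeMonoid α) : w = 1 ∨ ∃ u a, w = u * of a :=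
  (List.eq_nil_or_concat' w.toList).imp id fun ⟨u, a, h⟩ => ⟨ofList u, a, h⟩

end FreeMonoid

namespace OreExtension

open FreeMonoid Finsupp

variable {A : Type*} [Ring A] {n : ℕ}

noncomputable def tMul (σ : A →+* Matrix (Fin n) (Fin n) A) (δ : Fin n → A →+ A) (i : Fin n)
    (c : FreeMonoid (Fin n) →₀ A) : FreeMonoid (Fin n) →₀ A :=
  c.sum fun w x => (∑ j, single (of j * w) (σ x i j)) + single w (δ i x)

noncomputable def mulT (i : Fin n) (c : FreeMonoid (Fin n) →₀ A) : FreeMonoid (Fin n) →₀ A :=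
  c.embDomain (mulRightEmbedding (of i))

theorem mulT_apply_mul_of (i j : Fin n) (c : FreeMonoid (Fin n) →₀ A) (w : FreeMonoid (Fin n)) :
    mulT i c (w * of j) = if j = i then c w else 0 := by
  split_ifs with hji
  · subst hji
    exact embDomain_apply_self _ _ w
  · refine embDomain_of_notMem_range _ _ _ ?_
    rintro ⟨v, hv⟩
    exact hji (mul_of_eq_mul_of_iff.mp hv).2.symm

theorem mulT_apply_one (i : Fin n) (c : FreeMonoid (Fin n) →₀ A) : mulT i c 1 = 0 := by
  refine embDomain_of_notMem_range _ _ _ ?_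
  rintro ⟨v, hv⟩
  simpa using congrArg length hv

variable {σ : A →+* Matrix (Fin n) (Fin n) A} {δ : Fin n → A →+ A}

theorem tMul_apply_one (i : Fin n) (c : FreeMonoid (Fin n) →₀ A) :
    tMul σ δ i c 1 = δ i (c 1) := by
  rw [tMul, Finsupp.sum_apply, Finsupp.sum_eq_single 1]
  · simp
  · intro v _ hv
    simp [hv]
  · simp

theorem tMul_apply_of_mul (i j : Fin n) (c : FreeMonoid (Fin n) →₀ A) (w : FreeMonoid (Fin n))
    (hw : ∀ v ∈ c.support, v.length ≤ w.length) : tMul σ δ i c (of j * w) = σ (c w) i j := by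
  rw [tMul, Finsupp.sum_apply, Finsupp.sum_eq_single w]
  · have : w ≠ of j * w := fun h => by simpa using congrArg length h
    rw [Finsupp.add_apply, single_eq_of_ne' this, add_zero, finsetSum_apply,
      Finset.sum_eq_single_of_mem j (Finset.mem_univ j), single_eq_same]
    intro k _ hkj
    exact single_eq_of_ne' fun h => hkj (of_mul_eq_of_mul_iff.mp h).1
  · intro v hv hvw
    have : v ≠ of j * w := fun h => by simpa [h] using hw v (mem_support_iff.mpr hv)
    simp [of_mul_eq_of_mul_iff, hvw, this]
  · simp

theorem support_subset_one_of_tMul_eq_mulT (hn : 1 < n) (hσ : ∀ a : A, a ≠ 0 → IsUnit (σ a))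
    {c : FreeMonoid (Fin n) →₀ A} (h : ∀ i, tMul σ δ i c = mulT i c) : c.support ⊆ {1} := by
  intro w hw
  obtain ⟨w₀, hw₀, hmax⟩ := c.support.exists_max_image length ⟨w, hw⟩
  rcases w₀.eq_one_or_exists_eq_mul_of with rfl | ⟨u, k, rfl⟩
  · exact Finset.mem_singleton.mpr (length_eq_zero.mp (Nat.le_zero.mp (hmax w hw)))
  have : Nontrivial (Fin n) := Fin.nontrivial_iff_two_le.mpr hn
  obtain ⟨i, hik⟩ := exists_ne k
  have hc₀ : c (u * of k) ≠ 0 := mem_support_iff.mp hw₀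
  have : Nontrivial A := nontrivial_of_ne _ _ hc₀
  refine absurd (hσ _ hc₀) (Matrix.not_isUnit_of_row_eq_zero i fun j => ?_)
  rw [← tMul_apply_of_mul i j c _ hmax, h, ← mul_assoc, mulT_apply_mul_of, if_neg hik.symm]

theorem σ_eq_smul_one_of_tMul_eq_mulT {c : FreeMonoid (Fin n) →₀ A} (hc : c.support ⊆ {1})
    (h : ∀ i, tMul σ δ i c = mulT i c) : σ (c 1) = c 1 • (1 : Matrix (Fin n) (Fin n) A) := by
  ext i j
  have hlen : ∀ v ∈ c.support, v.length ≤ length 1 := fun v hv => by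
    rw [Finset.mem_singleton.mp (hc hv)]
  calc σ (c 1) i j = mulT i c (1 * of j) := by
        rw [← tMul_apply_of_mul i j c 1 hlen, h, mul_one, one_mul]
    _ = (c 1 • (1 : Matrix (Fin n) (Fin n) A)) i j := by
        rw [mulT_apply_mul_of]
        simp [Matrix.one_apply, eq_comm]

theorem δ_eq_zero_of_tMul_eq_mulT {c : FreeMonoid (Fin n) →₀ A}
    (h : ∀ i, tMul σ δ i c = mulT i c) (i : Fin n) : δ i (c 1) = 0 := by
  rw [← tMul_apply_one, h, mulT_apply_one]

variable (e : OreExtension A n σ δ)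

noncomputable def monomial : FreeMonoid (Fin n) →* e.S := FreeMonoid.lift e.t

noncomputable def eval : (FreeMonoid (Fin n) →₀ A) →+ e.S :=
  liftAddHom fun w => (AddMonoidHom.mulRight (e.monomial w)).comp e.ι.toAddMonoidHom

@[simp] theorem monomial_of (i : Fin n) : e.monomial (of i) = e.t i := lift_eval_of _ _

theorem eval_apply (c : FreeMonoid (Fin n) →₀ A) :
    e.eval c = c.sum fun w x => e.ι x * e.monomial w := rfl

@[simp] theorem eval_single (w : FreeMonoid (Fin n)) (x : A) :
    e.eval (single w x) = e.ι x * e.monomial w := by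
  simp [eval]

theorem eval_bijective : Function.Bijective e.eval :=
  (Function.bijective_iff_existsUnique _).mpr fun s => by
    simpa only [eval_apply, monomial, FreeMonoid.lift_apply, eq_comm] using e.unique_repr s

theorem ι_injective : Function.Injective e.ι := fun x y h =>
  single_injective 1 <| e.eval_bijective.1 <| by simp [h]

theorem eval_mulT (i : Fin n) (c : FreeMonoid (Fin n) →₀ A) :
    e.eval (mulT i c) = e.eval c * e.t i := by
  rw [mulT, eval_apply, eval_apply, sum_embDomain, Finsupp.sum_mul]
  refine Finset.sum_congr rfl fun w _ => ?_
  simp [mul_assoc]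

theorem eval_tMul (i : Fin n) (c : FreeMonoid (Fin n) →₀ A) :
    e.eval (tMul σ δ i c) = e.t i * e.eval c := by
  rw [tMul, map_finsuppSum, eval_apply, Finsupp.mul_sum]
  refine Finset.sum_congr rfl fun w _ => ?_
  simp [← mul_assoc, e.commute_rule, add_mul, Finset.sum_mul]

theorem commute_ι_t {a : A} (hσa : σ a = a • (1 : Matrix (Fin n) (Fin n) A))
    (hδa : ∀ i, δ i a = 0) (i : Fin n) : Commute (e.ι a) (e.t i) := by
  simp [Commute, SemiconjBy, e.commute_rule, hσa, hδa, Matrix.one_apply, apply_ite e.ι, ite_mul]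

theorem commute_ι_monomial {a : A} (hσa : σ a = a • (1 : Matrix (Fin n) (Fin n) A))
    (hδa : ∀ i, δ i a = 0) (w : FreeMonoid (Fin n)) : Commute (e.ι a) (e.monomial w) := by
  induction w using FreeMonoid.inductionOn' with
  | one => simp
  | of_mul i w ih => simpa using (e.commute_ι_t hσa hδa i).mul_right ih

theorem ι_mem_center {a : A} (hab : ∀ b : A, a * b = b * a)
    (hσa : σ a = a • (1 : Matrix (Fin n) (Fin n) A)) (hδa : ∀ i, δ i a = 0) :
    e.ι a ∈ Subring.center e.S := by
  refine Subring.mem_center_iff.mpr fun s => ?_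
  obtain ⟨c, rfl⟩ := e.eval_bijective.2 s
  refine (Commute.sum_right _ _ _ fun w _ => ?_).symm
  exact (Commute.map (hab (c w)) e.ι).mul_right (e.commute_ι_monomial hσa hδa w)

theorem tMul_eq_mulT_of_mem_center {c : FreeMonoid (Fin n) →₀ A}
    (hc : e.eval c ∈ Subring.center e.S) (i : Fin n) : tMul σ δ i c = mulT i c :=
  e.eval_bijective.1 <| by rw [eval_tMul, eval_mulT]; exact Subring.mem_center_iff.mp hc (e.t i)

theorem commute_of_ι_mem_center {a : A} (ha : e.ι a ∈ Subring.center e.S) (b : A) :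
    a * b = b * a :=
  e.ι_injective <| by simpa using (Subring.mem_center_iff.mp ha (e.ι b)).symm

end OreExtension

theorem center_of_S_general {K : Type*} [DivisionRing K] {n : ℕ} (hn : 1 < n)
    (σ : K →+* Matrix (Fin n) (Fin n) K) (δ : Fin n → K →+ K)
    (hσ : ∀ a : K, a ≠ 0 → IsUnit (σ a))
    (e : OreExtension K n σ δ) :
    ∀ s : e.S, s ∈ Subring.center e.S ↔
      ∃ a : K, s = e.ι a ∧ (∀ b : K, a * b = b * a) ∧
        σ a = a • (1 : Matrix (Fin n) (Fin n) K) ∧ ∀ i : Fin n, δ i a = 0 := by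
  intro s
  constructor
  · intro hs
    obtain ⟨c, rfl⟩ := e.eval_bijective.2 s
    have hcomm := e.tMul_eq_mulT_of_mem_center hs
    have hsupp := OreExtension.support_subset_one_of_tMul_eq_mulT hn hσ hcomm
    have hc : e.eval c = e.ι (c 1) := by
      conv_lhs => rw [Finsupp.support_subset_singleton.mp hsupp]
      simp
    rw [hc] at hs ⊢
    exact ⟨c 1, rfl, e.commute_of_ι_mem_center hs,
      OreExtension.σ_eq_smul_one_of_tMul_eq_mulT hsupp hcomm,
      OreExtension.δ_eq_zero_of_tMul_eq_mulT hcomm⟩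
  · rintro ⟨a, rfl, hab, hσa, hδa⟩
    exact e.ι_mem_center hab hσa hδa

/-- Let `K` be a division ring, `n > 1`, `σ : K → M_n(K)` a ring homomorphism with
`σ(a)` invertible for every `a ≠ 0`, and `δ` a `σ`-derivation.  The center of
`S = K[t₁,…,t_n; σ, δ]` is
`{a ∈ Z(K) : σ(a) = a Iₙ and δ_i(a) = 0 for all i}`. -/
theorem center_of_S {K : Type*} [DivisionRing K] {n : ℕ} (hn : 1 < n)
    (σ : K →+* Matrix (Fin n) (Fin n) K) (δ : Fin n → K →+ K)
    (hδ : ∀ (i : Fin n) (a b : K), δ i (a * b) = (∑ j, σ a i j * δ j b) + δ i a * b)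
    (hσ : ∀ a : K, a ≠ 0 → IsUnit (σ a))
    (e : OreExtension K n σ δ) :
    ∀ s : e.S, s ∈ Subring.center e.S ↔
      ∃ a : K, s = e.ι a ∧ (∀ b : K, a * b = b * a) ∧
        σ a = a • (1 : Matrix (Fin n) (Fin n) K) ∧ ∀ i : Fin n, δ i a = 0 :=
  center_of_S_general hn σ δ hσ e
end

section
/- Let A be a ring, S = A[t_1,…,t_n; σ, δ], a ∈ A^n, and I = Σ_i S(t_i − a_i) the left ideal generated by the t_i − a_i. Define the evaluation f(a) as the unique element of A representing f + I in S/I. Then for any f ∈ S, f(a) = f(T_a)(1), where T_a = (T_{a_1},…,T_{a_n}) with T_{a_i}(x) = Σ_j σ(x)_{ij} a_j + δ_i(x). -/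
/-!
Writing `D g := g - ι (φ g 1)` for the defect of `g`, one has
`D (g * h) = g * D h + D (g * ι (φ h 1))` because `φ` is multiplicative and `φ (ι b) 1 = b`.
Hence the elements `g` with `D (g * ι b) ∈ I` for all `b ∈ A` form a subring of `S`. It contains
`ι A` (on which `D` vanishes) and each `t i`, since the commutation rule together with the formula
for `T_{a_i}` gives `D (t i * ι b) = ∑ j, ι (σ b i j) * (t j - ι (a j))`. As `ι A` and the `t i`
generate `S`, that subring is everything, and `b = 1` gives the theorem.
-/

section Defect

variable {A S : Type*} [Ring A] [Ring S] (ι : A →+* S) (φ : S →+* AddMonoid.End A)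

theorem mul_sub_map_mul_apply_one (hφι : ∀ c x : A, φ (ι c) x = c * x) (g h : S) :
    g * h - ι (φ (g * h) 1) =
      g * (h - ι (φ h 1)) + (g * ι (φ h 1) - ι (φ (g * ι (φ h 1)) 1)) := by
  have hgι : φ (g * ι (φ h 1)) 1 = φ (g * h) 1 := by
    simp only [map_mul, AddMonoid.End.coe_mul, Function.comp_apply, hφι, mul_one]
  rw [hgι, mul_sub]
  abel

def defectSubring (hφι : ∀ c x : A, φ (ι c) x = c * x) (I : Submodule S S) : Subring S where
  carrier := {g | ∀ b, g * ι b - ι (φ (g * ι b) 1) ∈ I}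
  zero_mem' _ := by simp
  one_mem' b := by simp [hφι]
  add_mem' {g h} hg hh b := by
    have hadd : φ ((g + h) * ι b) 1 = φ (g * ι b) 1 + φ (h * ι b) 1 := by
      rw [add_mul, map_add]; rfl
    rw [hadd, add_mul, map_add, add_sub_add_comm]
    exact I.add_mem (hg b) (hh b)
  neg_mem' {g} hg b := by
    have hneg : φ (-g * ι b) 1 = -φ (g * ι b) 1 := by
      rw [neg_mul, map_neg]; rfl
    rw [hneg, neg_mul, map_neg, ← neg_sub']
    exact I.neg_mem (hg b)
  mul_mem' {g h} hg hh b := by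
    rw [mul_assoc, mul_sub_map_mul_apply_one ι φ hφι]
    exact I.add_mem (I.smul_mem g (hh b)) (hg _)

theorem sub_map_apply_one_mem_of_closure_eq_top (hφι : ∀ c x : A, φ (ι c) x = c * x)
    (I : Submodule S S) {T : Set S} (hT : Subring.closure T = ⊤)
    (hgen : ∀ s ∈ T, ∀ b, s * ι b - ι (φ (s * ι b) 1) ∈ I) (g : S) :
    g - ι (φ g 1) ∈ I := by
  have hle : Subring.closure T ≤ defectSubring ι φ hφι I := Subring.closure_le.2 hgen
  simpa using hle (hT ▸ Subring.mem_top g) 1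

end Defect

namespace OreExtension

variable {A : Type*} [Ring A] {n : ℕ} {σ : A →+* Matrix (Fin n) (Fin n) A}
  {δ : Fin n → A →+ A} (e : OreExtension A n σ δ)

theorem closure_range_ι_union_range_t : Subring.closure (Set.range e.ι ∪ Set.range e.t) = ⊤ := by
  refine eq_top_iff.2 fun s _ => ?_
  obtain ⟨c, rfl, -⟩ := e.unique_repr s
  refine Subring.sum_mem _ fun w _ => Subring.mul_mem _ ?_ (Subring.list_prod_mem _ ?_)
  · exact Subring.subset_closure (Or.inl ⟨_, rfl⟩)
  · simp only [List.mem_map]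
    rintro _ ⟨i, -, rfl⟩
    exact Subring.subset_closure (Or.inr ⟨i, rfl⟩)

theorem t_mul_ι_sub_map_apply_one (a : Fin n → A) (φ : e.S →+* AddMonoid.End A)
    (hφι : ∀ c x : A, φ (e.ι c) x = c * x)
    (hφt : ∀ (i : Fin n) (x : A), φ (e.t i) x = (∑ j, σ x i j * a j) + δ i x) (i : Fin n) (b : A) :
    e.t i * e.ι b - e.ι (φ (e.t i * e.ι b) 1) = ∑ j, e.ι (σ b i j) * (e.t j - e.ι (a j)) := by
  have hφ : φ (e.t i * e.ι b) 1 = (∑ j, σ b i j * a j) + δ i b := by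
    rw [map_mul, AddMonoid.End.coe_mul, Function.comp_apply, hφι, mul_one, hφt]
  rw [hφ, e.commute_rule]
  simp only [map_add, map_sum, map_mul, mul_sub, Finset.sum_sub_distrib]
  abel

end OreExtension

theorem eval_eq_pmt_at_one_general {A : Type*} [Ring A] {n : ℕ}
    (σ : A →+* Matrix (Fin n) (Fin n) A) (δ : Fin n → A →+ A)
    (e : OreExtension A n σ δ) (a : Fin n → A)
    (φ : e.S →+* AddMonoid.End A)
    (hφι : ∀ c x : A, φ (e.ι c) x = c * x)
    (hφt : ∀ (i : Fin n) (x : A), φ (e.t i) x = (∑ j, σ x i j * a j) + δ i x) :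
    ∀ f : e.S,
      f - e.ι (φ f 1) ∈
        Submodule.span e.S (Set.range fun i => e.t i - e.ι (a i)) := by
  intro f
  refine sub_map_apply_one_mem_of_closure_eq_top e.ι φ hφι _ e.closure_range_ι_union_range_t ?_ f
  rintro _ (⟨c, rfl⟩ | ⟨i, rfl⟩) b
  · simp [← map_mul, hφι]
  · rw [e.t_mul_ι_sub_map_apply_one a φ hφι hφt]
    exact Submodule.sum_mem _ fun j _ => Submodule.smul_mem _ _ (Submodule.subset_span ⟨j, rfl⟩)

/-- Evaluation via the left ideal `I = ∑ S(t_i − a_i)`: for every `f ∈ S`,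
the unique representative in `A` of `f + I` is `f(T_a)(1)`, where `T_a` is the
pseudo-multilinear transformation `T_{a_i}(x) = ∑ j σ(x)_{ij} a_j + δ_i(x)` and
`f(T_a) = φ_a(f)` for the attached ring homomorphism `φ_a : S → End(A,+)`.
Equivalently, `f − ι (φ_a f 1) ∈ I`. -/
theorem eval_eq_pmt_at_one {A : Type*} [Ring A] {n : ℕ}
    (σ : A →+* Matrix (Fin n) (Fin n) A) (δ : Fin n → A →+ A)
    (hδ : ∀ (i : Fin n) (a b : A), δ i (a * b) = (∑ j, σ a i j * δ j b) + δ i a * b)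
    (e : OreExtension A n σ δ) (a : Fin n → A)
    (φ : e.S →+* AddMonoid.End A)
    (hφι : ∀ c x : A, φ (e.ι c) x = c * x)
    (hφt : ∀ (i : Fin n) (x : A), φ (e.t i) x = (∑ j, σ x i j * a j) + δ i x) :
    ∀ f : e.S,
      f - e.ι (φ f 1) ∈
        Submodule.span e.S (Set.range fun i => e.t i - e.ι (a i)) :=
  eval_eq_pmt_at_one_general σ δ e a φ hφι hφt
end

section
/- Let A be a ring, S = A[t_1,…,t_n; σ, δ], f, g ∈ S, and a ∈ A^n with x := g(a) a unit of A. Define the (σ,δ)-conjugate a^x = σ(x) a x^{-1} + δ(x) x^{-1} ∈ A^n. Then (fg)(a) = f(a^x) · g(a). -/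
/-! The ideal `I_a = ∑ S(tᵢ - aᵢ)` is stable under right multiplication by `x` up to conjugating
the point: by the commutation rule, `(tᵢ - (aˣ)ᵢ) x = ∑ⱼ σ(x)ᵢⱼ (tⱼ - aⱼ)`, so `I_{aˣ} x ⊆ I_a`.
Writing `fg - f(aˣ) x = f (g - x) + (f - f(aˣ)) x` then puts both summands in `I_a`. -/

namespace OreExtension

variable {A : Type*} [Ring A] {n : ℕ}
  {σ : A →+* Matrix (Fin n) (Fin n) A} {δ : Fin n → A →+ A}

/-- The left ideal `∑ S(tᵢ - aᵢ)`; `s(a)` is the `b : A` with `s - b` in it. -/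
def evalIdeal (e : OreExtension A n σ δ) (a : Fin n → A) : Submodule e.S e.S :=
  Submodule.span e.S (Set.range fun i => e.t i - e.ι (a i))

variable (σ δ) in
def conjugate (a : Fin n → A) (x : Aˣ) : Fin n → A :=
  fun i => ((∑ j, σ (x : A) i j * a j) + δ i (x : A)) * (↑x⁻¹ : A)

variable (e : OreExtension A n σ δ)

theorem sub_conjugate_mul (a : Fin n → A) (x : Aˣ) (i : Fin n) :
    (e.t i - e.ι (conjugate σ δ a x i)) * e.ι (x : A) =
      ∑ j, e.ι (σ (x : A) i j) * (e.t j - e.ι (a j)) := by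
  have hx : conjugate σ δ a x i * x = (∑ j, σ (x : A) i j * a j) + δ i (x : A) := by
    rw [conjugate, mul_assoc, Units.inv_mul, mul_one]
  rw [sub_mul, e.commute_rule, ← map_mul, hx]
  simp only [mul_sub, Finset.sum_sub_distrib, ← map_mul, map_add, map_sum]
  abel

theorem mul_mem_evalIdeal_of_mem_evalIdeal_conjugate {a : Fin n → A} {x : Aˣ} {p : e.S}
    (hp : p ∈ e.evalIdeal (conjugate σ δ a x)) : p * e.ι (x : A) ∈ e.evalIdeal a := by
  -- right multiplication by `ι x` is `S`-linear, so it suffices to check the generators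
  suffices e.evalIdeal (conjugate σ δ a x) ≤
      (e.evalIdeal a).comap (LinearMap.toSpanSingleton e.S e.S (e.ι (x : A))) from this hp
  refine Submodule.span_le.mpr ?_
  rintro _ ⟨i, rfl⟩
  show (e.t i - e.ι (conjugate σ δ a x i)) * e.ι (x : A) ∈ e.evalIdeal a
  rw [sub_conjugate_mul]
  exact Submodule.sum_mem _ fun j _ =>
    Submodule.smul_mem _ _ (Submodule.subset_span ⟨j, rfl⟩)

end OreExtension

theorem product_formula_conjugate_general {A : Type*} [Ring A] {n : ℕ}
    (σ : A →+* Matrix (Fin n) (Fin n) A) (δ : Fin n → A →+ A)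
    (e : OreExtension A n σ δ) (a : Fin n → A)
    (f g : e.S) (x : Aˣ)
    (hg : g - e.ι (x : A) ∈
      Submodule.span e.S (Set.range fun i => e.t i - e.ι (a i)))
    (fb : A)
    (hfb : f - e.ι fb ∈ Submodule.span e.S (Set.range fun i =>
      e.t i - e.ι (((∑ j, σ (x : A) i j * a j) + δ i (x : A)) * (↑x⁻¹ : A)))) :
    f * g - e.ι (fb * (x : A)) ∈
      Submodule.span e.S (Set.range fun i => e.t i - e.ι (a i)) := by
  have hsplit : f * g - e.ι (fb * (x : A)) =
      f * (g - e.ι (x : A)) + (f - e.ι fb) * e.ι (x : A) := by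
    rw [map_mul]; noncomm_ring
  rw [hsplit]
  exact add_mem (Submodule.smul_mem _ f hg)
    (e.mul_mem_evalIdeal_of_mem_evalIdeal_conjugate hfb)

/-- Product formula with conjugation: if `x := g(a)` is a unit and
`a^x = σ(x) a x⁻¹ + δ(x) x⁻¹` is the `(σ,δ)`-conjugate of `a` by `x`, then
`(fg)(a) = f(a^x) g(a)`.  Evaluations are taken as representatives modulo the
corresponding left ideals `∑ S(t_i − a_i)` and `∑ S(t_i − (a^x)_i)`. -/
theorem product_formula_conjugate {A : Type*} [Ring A] {n : ℕ}
    (σ : A →+* Matrix (Fin n) (Fin n) A) (δ : Fin n → A →+ A)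
    (hδ : ∀ (i : Fin n) (a b : A), δ i (a * b) = (∑ j, σ a i j * δ j b) + δ i a * b)
    (e : OreExtension A n σ δ) (a : Fin n → A)
    (f g : e.S) (x : Aˣ)
    (hg : g - e.ι (x : A) ∈
      Submodule.span e.S (Set.range fun i => e.t i - e.ι (a i)))
    (fb : A)
    (hfb : f - e.ι fb ∈ Submodule.span e.S (Set.range fun i =>
      e.t i - e.ι (((∑ j, σ (x : A) i j * a j) + δ i (x : A)) * (↑x⁻¹ : A)))) :
    f * g - e.ι (fb * (x : A)) ∈
      Submodule.span e.S (Set.range fun i => e.t i - e.ι (a i)) :=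
  product_formula_conjugate_general σ δ e a f g x hg fb hfb
end

section
/- Let K be a division ring, S = K[t_1,…,t_n; σ, δ], and p ∈ S a right semi-invariant polynomial. If b ∈ K^n satisfies p(b) = 0, then for every nonzero a ∈ K the (σ,δ)-conjugate b^a = σ(a) b a^{-1} + δ(a) a^{-1} also satisfies p(b^a) = 0. Hence the conjugacy class Δ(b) is contained in the zero set V(p). -/
/-!
Write `I(b) = ∑ S (tᵢ - bᵢ)`, so that `p(b) = 0` means `p ∈ I(b)`. If `c = b^a`, the commutation
rule gives `(tᵢ - cᵢ) a = ∑ⱼ σ(a)ᵢⱼ (tⱼ - bⱼ)`; since `σ(a)` is invertible with inverse `σ(a⁻¹)`,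
each `tⱼ - bⱼ` lies in `I(c) a`, i.e. `I(b) a⁻¹ ⊆ I(c)`. Semi-invariance gives
`p a = a' p ∈ I(b)`, hence `p = (p a) a⁻¹ ∈ I(c)`.
-/

theorem Submodule.mul_mem_of_mem_span {S : Type*} [Ring S] {X : Set S} {J : Submodule S S}
    {r : S} (h : ∀ x ∈ X, x * r ∈ J) {m : S} (hm : m ∈ Submodule.span S X) : m * r ∈ J :=
  Submodule.span_le (p := J.comap (LinearMap.toSpanSingleton S S r)) |>.mpr h hm

namespace OreExtension

variable {A : Type*} [Ring A] {n : ℕ} {σ : A →+* Matrix (Fin n) (Fin n) A}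
  {δ : Fin n → A →+ A} (e : OreExtension A n σ δ)

def rootIdeal (b : Fin n → A) : Submodule e.S e.S :=
  Submodule.span e.S (Set.range fun i => e.t i - e.ι (b i))

theorem t_sub_mem_rootIdeal (b : Fin n → A) (i : Fin n) : e.t i - e.ι (b i) ∈ e.rootIdeal b :=
  Submodule.subset_span ⟨i, rfl⟩

variable {e}

theorem t_sub_mul_ι {a : A} {b c : Fin n → A}
    (hc : ∀ i, c i * a = (∑ j, σ a i j * b j) + δ i a) (i : Fin n) :
    (e.t i - e.ι (c i)) * e.ι a = ∑ j, e.ι (σ a i j) * (e.t j - e.ι (b j)) := by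
  rw [sub_mul, e.commute_rule, ← map_mul, hc]
  simp only [map_add, map_sum, map_mul, mul_sub, Finset.sum_sub_distrib]
  abel

theorem t_sub_eq_sum_mul_ι {a a' : A} (h : a' * a = 1) {b c : Fin n → A}
    (hc : ∀ i, c i * a = (∑ j, σ a i j * b j) + δ i a) (j : Fin n) :
    e.t j - e.ι (b j) = (∑ i, e.ι (σ a' j i) * (e.t i - e.ι (c i))) * e.ι a := by
  have hσ : σ a' * σ a = 1 := by rw [← map_mul, h, map_one]
  calc e.t j - e.ι (b j)
      = ∑ k, e.ι ((σ a' * σ a) j k) * (e.t k - e.ι (b k)) := by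
        simp [hσ, Matrix.one_apply]
    _ = ∑ i, e.ι (σ a' j i) * ((e.t i - e.ι (c i)) * e.ι a) := by
        simp only [t_sub_mul_ι hc, Matrix.mul_apply, map_sum, map_mul, Finset.sum_mul,
          Finset.mul_sum, mul_assoc]
        exact Finset.sum_comm
    _ = (∑ i, e.ι (σ a' j i) * (e.t i - e.ι (c i))) * e.ι a := by
        simp only [Finset.sum_mul, mul_assoc]

theorem mul_ι_inv_mem_rootIdeal (u : Aˣ) {b c : Fin n → A}
    (hc : ∀ i, c i * u = (∑ j, σ u i j * b j) + δ i u) {m : e.S} (hm : m ∈ e.rootIdeal b) :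
    m * e.ι ↑u⁻¹ ∈ e.rootIdeal c := by
  refine Submodule.mul_mem_of_mem_span ?_ hm
  rintro _ ⟨j, rfl⟩
  dsimp only
  rw [t_sub_eq_sum_mul_ι u.inv_mul hc j, mul_assoc, ← map_mul, u.mul_inv, map_one, mul_one]
  exact Submodule.sum_mem _ fun i _ => Submodule.smul_mem _ _ (e.t_sub_mem_rootIdeal c i)

end OreExtension

theorem semiInvariant_roots_closed_under_conjugation_general {K : Type*} [DivisionRing K]
    {n : ℕ}
    (σ : K →+* Matrix (Fin n) (Fin n) K) (δ : Fin n → K →+ K)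
    (e : OreExtension K n σ δ) (p : e.S)
    (hsi : ∀ a : K, ∃ a' : K, p * e.ι a = e.ι a' * p)
    (b : Fin n → K)
    (hb : p ∈ Submodule.span e.S (Set.range fun i => e.t i - e.ι (b i))) :
    ∀ a : K, a ≠ 0 →
      p ∈ Submodule.span e.S (Set.range fun i =>
        e.t i - e.ι (((∑ j, σ a i j * b j) + δ i a) * a⁻¹)) := by
  intro a ha
  have hpa : p * e.ι a ∈ e.rootIdeal b := by
    obtain ⟨a', h⟩ := hsi a
    exact h ▸ Submodule.smul_mem _ (e.ι a') hb
  have := OreExtension.mul_ι_inv_mem_rootIdeal (Units.mk0 a ha)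
    (fun i => inv_mul_cancel_right₀ ha _) hpa
  rwa [Units.val_inv_eq_inv_val, Units.val_mk0, mul_assoc, ← map_mul, mul_inv_cancel₀ ha,
    map_one, mul_one] at this

/-- Let `K` be a division ring and `p ∈ S = K[t;σ,δ]` a right semi-invariant
polynomial.  If `b ∈ Kⁿ` is a root of `p` (i.e. `p` lies in the left ideal
`∑ S(t_i − b_i)`), then every `(σ,δ)`-conjugate `b^a = σ(a) b a⁻¹ + δ(a) a⁻¹`
(`a ≠ 0`) is also a root of `p`; hence `Δ(b) ⊆ V(p)`. -/
theorem semiInvariant_roots_closed_under_conjugation {K : Type*} [DivisionRing K]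
    {n : ℕ}
    (σ : K →+* Matrix (Fin n) (Fin n) K) (δ : Fin n → K →+ K)
    (hδ : ∀ (i : Fin n) (c d : K), δ i (c * d) = (∑ j, σ c i j * δ j d) + δ i c * d)
    (e : OreExtension K n σ δ) (p : e.S)
    (hsi : ∀ a : K, ∃ a' : K, p * e.ι a = e.ι a' * p)
    (b : Fin n → K)
    (hb : p ∈ Submodule.span e.S (Set.range fun i => e.t i - e.ι (b i))) :
    ∀ a : K, a ≠ 0 →
      p ∈ Submodule.span e.S (Set.range fun i =>
        e.t i - e.ι (((∑ j, σ a i j * b j) + δ i a) * a⁻¹)) :=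
  semiInvariant_roots_closed_under_conjugation_general σ δ e p hsi b hb
end
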